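/- Let Ω be a locally compact Hausdorff space and Γ a nondegenerate Banach module over C₀(Ω) satisfying the AL-identity. Then for every s ∈ Γ there exists a positive continuous linear functional |s| on C₀(Ω) with |s|(f) = ‖f•s‖ for all real-valued f ∈ C₀(Ω) with f ≥ 0, and the assignment s ↦ |s| satisfies: (i) ‖|s|‖ = ‖s‖ for every s ∈ Γ; (ii) |f•s|(g) = |s|(|f|·g) for all f ∈ C₀(Ω), s ∈ Γ and g ∈ C₀(Ω); (iii) |s₁ + s₂|(f) ≤ |s₁|(f) + |s₂|(f) for all s₁, s₂ ∈ Γ and all real-valued f ∈ C₀(Ω) with f ≥ 0. -/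

import Mathlib

open scoped ZeroAtInfty

noncomputable section

variable {𝕜 : Type*} [RCLike 𝕜] {Ω : Type*} [TopologicalSpace Ω]

/-- A Banach module structure over `C₀(Ω, 𝕜)` on a `𝕜`-Banach space `Γ`. -/
structure C0Module (𝕜 : Type*) [RCLike 𝕜] (Ω : Type*) [TopologicalSpace Ω]
    (Γ : Type*) [NormedAddCommGroup Γ] [NormedSpace 𝕜 Γ] where
  smul : C₀(Ω, 𝕜) →L[𝕜] Γ →L[𝕜] Γ
  mul_smul : ∀ (f g : C₀(Ω, 𝕜)) (s : Γ), smul (f * g) s = smul f (smul g s)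
  norm_smul_le : ∀ (f : C₀(Ω, 𝕜)) (s : Γ), ‖smul f s‖ ≤ ‖f‖ * ‖s‖

variable {Γ : Type*} [NormedAddCommGroup Γ] [NormedSpace 𝕜 Γ]

/-- Nondegeneracy of a Banach module over `C₀(Ω, 𝕜)`. -/
def C0Module.Nondegenerate (M : C0Module 𝕜 Ω Γ) : Prop :=
  Dense (Submodule.span 𝕜 {x : Γ | ∃ (f : C₀(Ω, 𝕜)) (s : Γ), M.smul f s = x} : Set Γ)

/-- The inclusion `C₀(Ω, ℝ) ⊆ C₀(Ω, 𝕜)`. -/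
def ofRealC0 (𝕜 : Type*) [RCLike 𝕜] {Ω : Type*} [TopologicalSpace Ω] (f : C₀(Ω, ℝ)) :
    C₀(Ω, 𝕜) where
  toFun := fun x => (f x : 𝕜)
  continuous_toFun := RCLike.continuous_ofReal.comp f.continuous
  zero_at_infty' := by
    have h2 : Filter.Tendsto (fun r : ℝ => (r : 𝕜)) (nhds 0) (nhds 0) := by
      simpa using (RCLike.continuous_ofReal (K := 𝕜)).tendsto 0
    exact h2.comp f.zero_at_infty'

/-- The pointwise maximum of two functions in `C₀(Ω, ℝ)`. -/
def supC0 (f g : C₀(Ω, ℝ)) : C₀(Ω, ℝ) where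
  toFun := fun x => max (f x) (g x)
  continuous_toFun := f.continuous.max g.continuous
  zero_at_infty' := by simpa using f.zero_at_infty'.max g.zero_at_infty'

/-- The AM-identity: `‖(f₁ ⊔ f₂) • s‖ = max ‖f₁ • s‖ ‖f₂ • s‖` for nonnegative real-valued
`f₁, f₂ ∈ C₀(Ω, ℝ)`. -/
def C0Module.IsAM (M : C0Module 𝕜 Ω Γ) : Prop :=
  ∀ (f₁ f₂ : C₀(Ω, ℝ)), (∀ x, 0 ≤ f₁ x) → (∀ x, 0 ≤ f₂ x) → ∀ s : Γ,
    ‖M.smul (ofRealC0 𝕜 (supC0 f₁ f₂)) s‖ =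
      max ‖M.smul (ofRealC0 𝕜 f₁) s‖ ‖M.smul (ofRealC0 𝕜 f₂) s‖

/-- A `U₀(Ω)`-valued norm on a Banach module `Γ` over `C₀(Ω, 𝕜)`. -/
structure IsU0Norm (M : C0Module 𝕜 Ω Γ) (N : Γ → Ω → ℝ) : Prop where
  nonneg : ∀ (s : Γ) (x : Ω), 0 ≤ N s x
  upperSemicontinuous : ∀ s : Γ, UpperSemicontinuous (N s)
  zero_at_infty : ∀ s : Γ, ∀ ε > 0, ∃ K : Set Ω, IsCompact K ∧ ∀ x ∉ K, N s x ≤ ε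
  sup_eq_norm : ∀ s : Γ, (⨆ x : Ω, N s x) = ‖s‖
  smul_eq : ∀ (f : C₀(Ω, 𝕜)) (s : Γ) (x : Ω), N (M.smul f s) x = ‖f x‖ * N s x
  subadd : ∀ (s₁ s₂ : Γ) (x : Ω), N (s₁ + s₂) x ≤ N s₁ x + N s₂ x

/-- The canonical candidate for the `U₀(Ω)`-valued norm. -/
def normFormula (M : C0Module 𝕜 Ω Γ) (s : Γ) (x : Ω) : ℝ :=
  sInf {r : ℝ | ∃ f : C₀(Ω, ℝ), (∀ y, 0 ≤ f y) ∧ f x = 1 ∧ r = ‖M.smul (ofRealC0 𝕜 f) s‖}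


/-- The pointwise modulus `|f| : x ↦ |f x|` of `f ∈ C₀(Ω, 𝕜)`, regarded as a `𝕜`-valued
function in `C₀(Ω, 𝕜)`. -/
def absC0 (f : C₀(Ω, 𝕜)) : C₀(Ω, 𝕜) where
  toFun := fun x => (‖f x‖ : 𝕜)
  continuous_toFun := RCLike.continuous_ofReal.comp f.continuous.norm
  zero_at_infty' := by
    have h : Filter.Tendsto (fun x => ‖f x‖) (Filter.cocompact Ω) (nhds 0) := by
      simpa using f.zero_at_infty'.norm
    have h2 : Filter.Tendsto (fun r : ℝ => (r : 𝕜)) (nhds 0) (nhds 0) := by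
      simpa using (RCLike.continuous_ofReal (K := 𝕜)).tendsto 0
    exact h2.comp h

/-- The AL-identity: `‖f₁ • s + f₂ • s‖ = ‖f₁ • s‖ + ‖f₂ • s‖` for nonnegative real-valued
`f₁, f₂ ∈ C₀(Ω, ℝ)`. -/
def C0Module.IsAL (M : C0Module 𝕜 Ω Γ) : Prop :=
  ∀ (f₁ f₂ : C₀(Ω, ℝ)), (∀ x, 0 ≤ f₁ x) → (∀ x, 0 ≤ f₂ x) → ∀ s : Γ,
    ‖M.smul (ofRealC0 𝕜 f₁) s + M.smul (ofRealC0 𝕜 f₂) s‖ =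
      ‖M.smul (ofRealC0 𝕜 f₁) s‖ + ‖M.smul (ofRealC0 𝕜 f₂) s‖

namespace ALaux

instance : IsScalarTower ℝ 𝕜 C₀(Ω, 𝕜) :=
  ⟨fun r c f => ZeroAtInftyContinuousMap.ext fun x => by
    simp [ZeroAtInftyContinuousMap.smul_apply, smul_assoc]⟩

lemma c0_norm_apply_le {β : Type*} [SeminormedAddCommGroup β] (f : C₀(Ω, β)) (x : Ω) :
    ‖f x‖ ≤ ‖f‖ := BoundedContinuousFunction.norm_coe_le_norm f.toBCF x

lemma c0_norm_le {β : Type*} [SeminormedAddCommGroup β] (f : C₀(Ω, β)) {C : ℝ} (h0 : 0 ≤ C)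
    (h : ∀ x, ‖f x‖ ≤ C) : ‖f‖ ≤ C :=
  (BoundedContinuousFunction.norm_le h0).mpr h

@[simp] lemma ofRealC0_apply (f : C₀(Ω, ℝ)) (x : Ω) : ofRealC0 𝕜 f x = (f x : 𝕜) := rfl

@[simp] lemma supC0_apply (f g : C₀(Ω, ℝ)) (x : Ω) : supC0 f g x = max (f x) (g x) := rfl

lemma ofRealC0_add (f g : C₀(Ω, ℝ)) :
    ofRealC0 𝕜 (f + g) = ofRealC0 𝕜 f + ofRealC0 𝕜 g := by
  ext x; simp

lemma ofRealC0_smul (r : ℝ) (f : C₀(Ω, ℝ)) :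
    ofRealC0 𝕜 (r • f) = (r : 𝕜) • ofRealC0 𝕜 f := by
  ext x; simp [smul_eq_mul]

@[simp] lemma ofRealC0_zero : ofRealC0 𝕜 (0 : C₀(Ω, ℝ)) = 0 := by ext x; simp

lemma ofRealC0_norm_le (f : C₀(Ω, ℝ)) : ‖ofRealC0 𝕜 f‖ ≤ ‖f‖ := by
  refine c0_norm_le _ (norm_nonneg f) fun x => ?_
  simpa [RCLike.norm_ofReal] using (c0_norm_apply_le f x)



variable (M : C0Module 𝕜 Ω Γ)

def nu (s : Γ) (f : C₀(Ω, ℝ)) : ℝ := ‖M.smul (ofRealC0 𝕜 f) s‖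

lemma nu_nonneg (s : Γ) (f : C₀(Ω, ℝ)) : 0 ≤ nu M s f := norm_nonneg _

@[simp] lemma nu_zero (s : Γ) : nu M s 0 = 0 := by
  simp [nu, ofRealC0_zero]

lemma nu_add (hAL : M.IsAL) (s : Γ) {f g : C₀(Ω, ℝ)} (hf : ∀ x, 0 ≤ f x)
    (hg : ∀ x, 0 ≤ g x) : nu M s (f + g) = nu M s f + nu M s g := by
  unfold nu
  rw [ofRealC0_add, map_add, ContinuousLinearMap.add_apply]
  exact hAL f g hf hg s

lemma nu_smul (s : Γ) {r : ℝ} (hr : 0 ≤ r) (f : C₀(Ω, ℝ)) :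
    nu M s (r • f) = r * nu M s f := by
  unfold nu
  rw [ofRealC0_smul, map_smul, ContinuousLinearMap.smul_apply, norm_smul,
    RCLike.norm_ofReal, abs_of_nonneg hr]

lemma nu_le (s : Γ) (f : C₀(Ω, ℝ)) : nu M s f ≤ ‖f‖ * ‖s‖ :=
  (M.norm_smul_le _ s).trans
    (mul_le_mul_of_nonneg_right (ofRealC0_norm_le f) (norm_nonneg s))

-- positive and negative parts
def posP (h : C₀(Ω, ℝ)) : C₀(Ω, ℝ) := supC0 h 0
def negP (h : C₀(Ω, ℝ)) : C₀(Ω, ℝ) := supC0 (-h) 0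

@[simp] lemma posP_apply (h : C₀(Ω, ℝ)) (x : Ω) : posP h x = max (h x) 0 := rfl
@[simp] lemma negP_apply (h : C₀(Ω, ℝ)) (x : Ω) : negP h x = max (-h x) 0 := by
  simp [negP]

lemma posP_nonneg (h : C₀(Ω, ℝ)) (x : Ω) : 0 ≤ posP h x := le_max_right _ _
lemma negP_nonneg (h : C₀(Ω, ℝ)) (x : Ω) : 0 ≤ negP h x := by simp

lemma max_zero_eq (a : ℝ) : max a 0 = (a + |a|) / 2 := by
  rcases le_total 0 a with h | h
  · rw [max_eq_left h, abs_of_nonneg h]; ring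
  · rw [max_eq_right h, abs_of_nonpos h]; ring

def psi (s : Γ) (h : C₀(Ω, ℝ)) : ℝ := nu M s (posP h) - nu M s (negP h)

lemma psi_of_nonneg (s : Γ) {f : C₀(Ω, ℝ)} (hf : ∀ x, 0 ≤ f x) :
    psi M s f = nu M s f := by
  have h1 : posP f = f := by ext x; simp [max_eq_left (hf x)]
  have h2 : negP f = 0 := by
    ext x; simp [max_eq_right (neg_nonpos.mpr (hf x))]
  simp [psi, h1, h2]

lemma psi_add (hAL : M.IsAL) (s : Γ) (h k : C₀(Ω, ℝ)) :
    psi M s (h + k) = psi M s h + psi M s k := by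
  have key : posP (h + k) + (negP h + negP k) = negP (h + k) + (posP h + posP k) := by
    ext x
    simp only [ZeroAtInftyContinuousMap.coe_add, Pi.add_apply, posP_apply, negP_apply,
      neg_add_rev]
    rw [max_zero_eq, max_zero_eq, max_zero_eq, max_zero_eq, max_zero_eq, max_zero_eq,
      abs_neg, abs_neg]
    rw [show -k x + -h x = -(h x + k x) by ring, abs_neg]
    ring
  have hn : ∀ x, 0 ≤ (negP h + negP k) x := fun x => by
    simp only [ZeroAtInftyContinuousMap.coe_add, Pi.add_apply]
    exact add_nonneg (negP_nonneg h x) (negP_nonneg k x)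
  have hp : ∀ x, 0 ≤ (posP h + posP k) x := fun x => by
    simp only [ZeroAtInftyContinuousMap.coe_add, Pi.add_apply]
    exact add_nonneg (posP_nonneg h x) (posP_nonneg k x)
  have e1 : nu M s (posP (h + k)) + (nu M s (negP h) + nu M s (negP k)) =
      nu M s (negP (h + k)) + (nu M s (posP h) + nu M s (posP k)) := by
    rw [← nu_add M hAL s (negP_nonneg h) (negP_nonneg k),
      ← nu_add M hAL s (posP_nonneg h) (posP_nonneg k),
      ← nu_add M hAL s (posP_nonneg (h + k)) hn,
      ← nu_add M hAL s (negP_nonneg (h + k)) hp, key]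
  unfold psi; linarith

lemma psi_smul (s : Γ) (r : ℝ) (h : C₀(Ω, ℝ)) :
    psi M s (r • h) = r * psi M s h := by
  rcases le_total 0 r with hr | hr
  · have h1 : posP (r • h) = r • posP h := by
      ext x
      simp only [posP_apply, ZeroAtInftyContinuousMap.coe_smul, Pi.smul_apply, smul_eq_mul]
      rw [mul_max_of_nonneg _ _ hr, mul_zero]
    have h2 : negP (r • h) = r • negP h := by
      ext x
      simp only [negP_apply, ZeroAtInftyContinuousMap.coe_smul, Pi.smul_apply, smul_eq_mul]
      rw [mul_max_of_nonneg _ _ hr, mul_zero, neg_mul_eq_mul_neg]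
    rw [psi, h1, h2, nu_smul M s hr, nu_smul M s hr]; unfold psi; ring
  · have hr' : 0 ≤ -r := by linarith
    have h1 : posP (r • h) = (-r) • negP h := by
      ext x
      simp only [posP_apply, negP_apply, ZeroAtInftyContinuousMap.coe_smul, Pi.smul_apply,
        smul_eq_mul]
      rw [mul_max_of_nonneg _ _ hr', mul_zero]; ring_nf
    have h2 : negP (r • h) = (-r) • posP h := by
      ext x
      simp only [posP_apply, negP_apply, ZeroAtInftyContinuousMap.coe_smul, Pi.smul_apply,
        smul_eq_mul]
      rw [mul_max_of_nonneg _ _ hr', mul_zero]; ring_nf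
    rw [psi, h1, h2, nu_smul M s hr', nu_smul M s hr']; unfold psi; ring

lemma abs_psi_le (s : Γ) (h : C₀(Ω, ℝ)) : |psi M s h| ≤ ‖h‖ * ‖s‖ := by
  have hp : nu M s (posP h) ≤ ‖h‖ * ‖s‖ := by
    refine (nu_le M s _).trans (mul_le_mul_of_nonneg_right ?_ (norm_nonneg s))
    refine c0_norm_le _ (norm_nonneg h) fun x => ?_
    rw [Real.norm_eq_abs, posP_apply, abs_of_nonneg (le_max_right _ _)]
    exact max_le ((le_abs_self _).trans ((c0_norm_apply_le h x))) (norm_nonneg h)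
  have hn : nu M s (negP h) ≤ ‖h‖ * ‖s‖ := by
    refine (nu_le M s _).trans (mul_le_mul_of_nonneg_right ?_ (norm_nonneg s))
    refine c0_norm_le _ (norm_nonneg h) fun x => ?_
    rw [Real.norm_eq_abs, negP_apply, abs_of_nonneg (by simp)]
    refine max_le ?_ (norm_nonneg h)
    have := c0_norm_apply_le h x
    rw [Real.norm_eq_abs] at this
    cases abs_cases (h x) with
    | inl hc => linarith [hc.1]
    | inr hc => linarith [hc.1]
  have h1 := nu_nonneg M s (posP h)
  have h2 := nu_nonneg M s (negP h)
  rw [abs_le]; constructor <;> [unfold psi; unfold psi] <;> linarith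



def reC0 (g : C₀(Ω, 𝕜)) : C₀(Ω, ℝ) where
  toFun := fun x => RCLike.re (g x)
  continuous_toFun := (RCLike.continuous_re (K := 𝕜)).comp g.continuous
  zero_at_infty' := by
    have h2 : Filter.Tendsto (fun z : 𝕜 => RCLike.re z) (nhds 0) (nhds 0) := by
      simpa using (RCLike.continuous_re (K := 𝕜)).tendsto 0
    exact h2.comp g.zero_at_infty'

@[simp] lemma reC0_apply (g : C₀(Ω, 𝕜)) (x : Ω) : reC0 g x = RCLike.re (g x) := rfl

lemma reC0_add (g₁ g₂ : C₀(Ω, 𝕜)) : reC0 (g₁ + g₂) = reC0 g₁ + reC0 g₂ := by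
  ext x; simp

lemma reC0_smul (r : ℝ) (g : C₀(Ω, 𝕜)) : reC0 (r • g) = r • reC0 g := by
  ext x
  simp only [reC0_apply, ZeroAtInftyContinuousMap.coe_smul, Pi.smul_apply, smul_eq_mul]
  exact RCLike.smul_re r (g x)

@[simp] lemma reC0_ofReal (f : C₀(Ω, ℝ)) : reC0 (ofRealC0 𝕜 f) = f := by
  ext x; simp

lemma reC0_norm_le (g : C₀(Ω, 𝕜)) : ‖reC0 g‖ ≤ ‖g‖ := by
  refine c0_norm_le _ (norm_nonneg g) fun x => ?_
  exact (RCLike.abs_re_le_norm (g x)).trans (c0_norm_apply_le g x)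

variable (M : C0Module 𝕜 Ω Γ)

/-- The real-linear functional `g ↦ ψ_s(Re g)`. -/
def frL (hAL : M.IsAL) (s : Γ) : C₀(Ω, 𝕜) →L[ℝ] ℝ :=
  LinearMap.mkContinuous
    { toFun := fun g => psi M s (reC0 g)
      map_add' := fun g₁ g₂ => by rw [reC0_add, psi_add M hAL]
      map_smul' := fun r g => by rw [reC0_smul, psi_smul]; rfl }
    ‖s‖ (fun g => by
      rw [Real.norm_eq_abs, mul_comm]
      exact (abs_psi_le M s (reC0 g)).trans
        (mul_le_mul_of_nonneg_right (reC0_norm_le g) (norm_nonneg s)))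

lemma frL_apply (hAL : M.IsAL) (s : Γ) (g : C₀(Ω, 𝕜)) :
    frL M hAL s g = psi M s (reC0 g) := rfl

lemma frL_norm_le (hAL : M.IsAL) (s : Γ) : ‖frL M hAL s‖ ≤ ‖s‖ :=
  LinearMap.mkContinuous_norm_le _ (norm_nonneg s) _

lemma frL_ofReal (hAL : M.IsAL) (s : Γ) {f : C₀(Ω, ℝ)} (hf : ∀ x, 0 ≤ f x) :
    frL M hAL s (ofRealC0 𝕜 f) = nu M s f := by
  rw [frL_apply, reC0_ofReal, psi_of_nonneg M s hf]



@[simp] lemma absC0_apply (f : C₀(Ω, 𝕜)) (x : Ω) : absC0 f x = (‖f x‖ : 𝕜) := rfl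

/-- approximate phase function -/
def phase (f : C₀(Ω, 𝕜)) {ε : ℝ} (hε : 0 < ε) : C₀(Ω, 𝕜) where
  toFun := fun x => f x / ((max ‖f x‖ ε : ℝ) : 𝕜)
  continuous_toFun := by
    refine f.continuous.div
      (RCLike.continuous_ofReal.comp (f.continuous.norm.max continuous_const)) fun x => ?_
    exact RCLike.ofReal_ne_zero.mpr (ne_of_gt (lt_of_lt_of_le hε (le_max_right _ _)))
  zero_at_infty' := by
    have hb : ∀ x, ‖f x / ((max ‖f x‖ ε : ℝ) : 𝕜)‖ ≤ ‖f x‖ / ε := by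
      intro x
      rw [norm_div, RCLike.norm_ofReal,
        abs_of_pos (lt_of_lt_of_le hε (le_max_right _ _))]
      exact div_le_div_of_nonneg_left (norm_nonneg _) hε (le_max_right _ _)
    have h : Filter.Tendsto (fun x => ‖f x‖ / ε) (Filter.cocompact Ω) (nhds 0) := by
      simpa using f.zero_at_infty'.norm.div_const ε
    exact squeeze_zero_norm hb h

lemma phase_apply (f : C₀(Ω, 𝕜)) {ε : ℝ} (hε : 0 < ε) (x : Ω) :
    phase f hε x = f x / ((max ‖f x‖ ε : ℝ) : 𝕜) := rfl

lemma phase_apply_norm_le (f : C₀(Ω, 𝕜)) {ε : ℝ} (hε : 0 < ε) (x : Ω) :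
    ‖phase f hε x‖ ≤ 1 := by
  rw [phase_apply, norm_div, RCLike.norm_ofReal,
    abs_of_pos (lt_of_lt_of_le hε (le_max_right _ _))]
  exact div_le_one_of_le₀ (le_max_left _ _)
    (le_of_lt (lt_of_lt_of_le hε (le_max_right _ _)))

lemma phase_norm_le (f : C₀(Ω, 𝕜)) {ε : ℝ} (hε : 0 < ε) : ‖phase f hε‖ ≤ 1 :=
  c0_norm_le _ zero_le_one (phase_apply_norm_le f hε)

lemma star_phase_norm_le (f : C₀(Ω, 𝕜)) {ε : ℝ} (hε : 0 < ε) :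
    ‖star (phase f hε)‖ ≤ 1 := by
  refine c0_norm_le _ zero_le_one fun x => ?_
  calc ‖star (phase f hε) x‖ = ‖phase f hε x‖ := by
        simp [ZeroAtInftyContinuousMap.coe_star]
    _ ≤ 1 := phase_apply_norm_le f hε x

lemma scalar_bound {r ε : ℝ} (hr : 0 ≤ r) (hε : 0 < ε) :
    r * ((max r ε - r) / max r ε) ≤ ε := by
  rcases le_total ε r with h | h
  · rw [max_eq_left h]; simp [le_of_lt hε]
  · rw [max_eq_right h]
    have h1 : r / ε ≤ 1 := div_le_one_of_le₀ h (le_of_lt hε)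
    have : r * ((ε - r) / ε) = (r / ε) * (ε - r) := by ring
    rw [this]
    calc (r / ε) * (ε - r) ≤ 1 * (ε - r) :=
          mul_le_mul_of_nonneg_right h1 (by linarith)
      _ ≤ ε := by linarith

lemma norm_sub_phase_mul_abs (f : C₀(Ω, 𝕜)) {ε : ℝ} (hε : 0 < ε) :
    ‖f - phase f hε * absC0 f‖ ≤ ε := by
  refine c0_norm_le _ (le_of_lt hε) fun x => ?_
  have hm : ((max ‖f x‖ ε : ℝ) : 𝕜) ≠ 0 :=
    RCLike.ofReal_ne_zero.mpr (ne_of_gt (lt_of_lt_of_le hε (le_max_right _ _)))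
  have key : (f - phase f hε * absC0 f) x
      = f x * (((max ‖f x‖ ε - ‖f x‖) / max ‖f x‖ ε : ℝ) : 𝕜) := by
    simp only [ZeroAtInftyContinuousMap.coe_sub, Pi.sub_apply,
      ZeroAtInftyContinuousMap.coe_mul, Pi.mul_apply, phase_apply, absC0_apply]
    rw [RCLike.ofReal_div, RCLike.ofReal_sub, sub_div, div_self hm, mul_sub, mul_one]
    ring
  rw [key, norm_mul, RCLike.norm_ofReal,
    abs_of_nonneg (div_nonneg (by simp [le_max_left]) (le_of_lt (lt_of_lt_of_le hε (le_max_right _ _))))]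
  exact scalar_bound (norm_nonneg (f x)) hε

lemma norm_abs_sub_starphase_mul (f : C₀(Ω, 𝕜)) {ε : ℝ} (hε : 0 < ε) :
    ‖absC0 f - star (phase f hε) * f‖ ≤ ε := by
  refine c0_norm_le _ (le_of_lt hε) fun x => ?_
  have hm : ((max ‖f x‖ ε : ℝ) : 𝕜) ≠ 0 :=
    RCLike.ofReal_ne_zero.mpr (ne_of_gt (lt_of_lt_of_le hε (le_max_right _ _)))
  have hconj : (starRingEnd 𝕜) (f x) * f x = ((‖f x‖ ^ 2 : ℝ) : 𝕜) := by
    rw [RCLike.conj_mul]; norm_cast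
  have key : (absC0 f - star (phase f hε) * f) x
      = ((‖f x‖ * ((max ‖f x‖ ε - ‖f x‖) / max ‖f x‖ ε) : ℝ) : 𝕜) := by
    simp only [ZeroAtInftyContinuousMap.coe_sub, Pi.sub_apply,
      ZeroAtInftyContinuousMap.coe_mul, Pi.mul_apply, absC0_apply,
      ZeroAtInftyContinuousMap.coe_star, Pi.star_apply, phase_apply]
    rw [star_div₀, RCLike.star_def, RCLike.conj_ofReal, div_mul_eq_mul_div, hconj]
    push_cast
    field_simp
  rw [key, RCLike.norm_ofReal,
    abs_of_nonneg (mul_nonneg (norm_nonneg _) (div_nonneg (by simp [le_max_left])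
      (le_of_lt (lt_of_lt_of_le hε (le_max_right _ _)))))]
  exact scalar_bound (norm_nonneg (f x)) hε


variable (M : C0Module 𝕜 Ω Γ)

lemma le_add_eps_mul (a b : ℝ) (s : Γ) (h : ∀ ε : ℝ, 0 < ε → a ≤ b + ε * ‖s‖) : a ≤ b := by
  refine le_of_forall_pos_le_add fun δ hδ => ?_
  rcases eq_or_lt_of_le (norm_nonneg s) with hs | hs
  · have := h 1 one_pos
    rw [← hs, mul_zero, add_zero] at this
    linarith
  · have := h (δ / ‖s‖) (div_pos hδ hs)
    rw [div_mul_cancel₀ _ (ne_of_gt hs)] at this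
    linarith

/-- Key lemma: the norm of `f • s` only depends on the modulus of `f`. -/
lemma norm_smul_abs (f : C₀(Ω, 𝕜)) (s : Γ) :
    ‖M.smul (absC0 f) s‖ = ‖M.smul f s‖ := by
  have dir1 : ∀ ε : ℝ, 0 < ε → ‖M.smul (absC0 f) s‖ ≤ ‖M.smul f s‖ + ε * ‖s‖ := by
    intro ε hε
    have h1 : ‖M.smul (absC0 f) s - M.smul (star (phase f hε) * f) s‖ ≤ ε * ‖s‖ := by
      rw [← ContinuousLinearMap.sub_apply, ← map_sub]
      exact (M.norm_smul_le _ s).trans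
        (mul_le_mul_of_nonneg_right (norm_abs_sub_starphase_mul f hε) (norm_nonneg s))
    have h2 : ‖M.smul (star (phase f hε) * f) s‖ ≤ ‖M.smul f s‖ := by
      rw [M.mul_smul]
      refine (M.norm_smul_le _ _).trans ?_
      have : ‖star (phase f hε)‖ ≤ 1 := star_phase_norm_le f hε
      calc ‖star (phase f hε)‖ * ‖M.smul f s‖ ≤ 1 * ‖M.smul f s‖ :=
            mul_le_mul_of_nonneg_right this (norm_nonneg _)
        _ = ‖M.smul f s‖ := one_mul _
    calc ‖M.smul (absC0 f) s‖
        ≤ ‖M.smul (star (phase f hε) * f) s‖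
          + ‖M.smul (absC0 f) s - M.smul (star (phase f hε) * f) s‖ := by
          have := norm_add_le (M.smul (star (phase f hε) * f) s)
            (M.smul (absC0 f) s - M.smul (star (phase f hε) * f) s)
          simpa using this
      _ ≤ ‖M.smul f s‖ + ε * ‖s‖ := add_le_add h2 h1
  have dir2 : ∀ ε : ℝ, 0 < ε → ‖M.smul f s‖ ≤ ‖M.smul (absC0 f) s‖ + ε * ‖s‖ := by
    intro ε hε
    have h1 : ‖M.smul f s - M.smul (phase f hε * absC0 f) s‖ ≤ ε * ‖s‖ := by
      rw [← ContinuousLinearMap.sub_apply, ← map_sub]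
      exact (M.norm_smul_le _ s).trans
        (mul_le_mul_of_nonneg_right (norm_sub_phase_mul_abs f hε) (norm_nonneg s))
    have h2 : ‖M.smul (phase f hε * absC0 f) s‖ ≤ ‖M.smul (absC0 f) s‖ := by
      rw [M.mul_smul]
      refine (M.norm_smul_le _ _).trans ?_
      calc ‖phase f hε‖ * ‖M.smul (absC0 f) s‖ ≤ 1 * ‖M.smul (absC0 f) s‖ :=
            mul_le_mul_of_nonneg_right (phase_norm_le f hε) (norm_nonneg _)
        _ = ‖M.smul (absC0 f) s‖ := one_mul _
    calc ‖M.smul f s‖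
        ≤ ‖M.smul (phase f hε * absC0 f) s‖
          + ‖M.smul f s - M.smul (phase f hε * absC0 f) s‖ := by
          have := norm_add_le (M.smul (phase f hε * absC0 f) s)
            (M.smul f s - M.smul (phase f hε * absC0 f) s)
          simpa using this
      _ ≤ ‖M.smul (absC0 f) s‖ + ε * ‖s‖ := add_le_add h2 h1
  exact le_antisymm (le_add_eps_mul _ _ s dir1) (le_add_eps_mul _ _ s dir2)


variable (M : C0Module 𝕜 Ω Γ)

lemma approx_id_span (u : Γ)
    (hu : u ∈ Submodule.span 𝕜 {x : Γ | ∃ (f : C₀(Ω, 𝕜)) (s : Γ), M.smul f s = x})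
    {ε : ℝ} (hε : 0 < ε) :
    ∃ K : Set Ω, IsCompact K ∧ ∀ e : C₀(Ω, ℝ), (∀ x, 0 ≤ e x ∧ e x ≤ 1) →
      (∀ x ∈ K, e x = 1) → ‖M.smul (ofRealC0 𝕜 e) u - u‖ ≤ ε := by
  induction hu using Submodule.span_induction generalizing ε with
  | mem x hx =>
    obtain ⟨f, t, rfl⟩ := hx
    set δ : ℝ := ε / (‖t‖ + 1) with hδdef
    have hδ : 0 < δ := div_pos hε (by positivity)
    have hmem : {x : Ω | ‖f x‖ < δ} ∈ Filter.cocompact Ω := by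
      have := f.zero_at_infty'
      have h2 : ∀ᶠ x in Filter.cocompact Ω, ‖f x‖ < δ := by
        have := Metric.tendsto_nhds.mp this δ hδ
        simpa [dist_zero_right] using this
      exact h2
    obtain ⟨K, hK, hKsub⟩ := Filter.mem_cocompact.mp hmem
    refine ⟨K, hK, fun e he he1 => ?_⟩
    have key : M.smul (ofRealC0 𝕜 e) (M.smul f t) - M.smul f t
        = M.smul (ofRealC0 𝕜 e * f - f) t := by
      rw [map_sub, ContinuousLinearMap.sub_apply, ← M.mul_smul]
    rw [key]
    refine (M.norm_smul_le _ t).trans ?_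
    have hbound : ‖ofRealC0 𝕜 e * f - f‖ ≤ δ := by
      refine c0_norm_le _ (le_of_lt hδ) fun x => ?_
      have hval : (ofRealC0 𝕜 e * f - f) x = ((e x - 1 : ℝ) : 𝕜) * f x := by
        simp only [ZeroAtInftyContinuousMap.coe_sub, Pi.sub_apply,
          ZeroAtInftyContinuousMap.coe_mul, Pi.mul_apply, ofRealC0_apply]
        push_cast
        ring
      rw [hval, norm_mul, RCLike.norm_ofReal]
      by_cases hx : x ∈ K
      · simp [he1 x hx, le_of_lt hδ]
      · have h1 : |e x - 1| ≤ 1 := by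
          rw [abs_le]; constructor <;> linarith [(he x).1, (he x).2]
        have h2 : ‖f x‖ < δ := hKsub (Set.mem_compl hx)
        calc |e x - 1| * ‖f x‖ ≤ 1 * δ :=
              mul_le_mul h1 (le_of_lt h2) (norm_nonneg _) zero_le_one
          _ = δ := one_mul δ
    calc ‖ofRealC0 𝕜 e * f - f‖ * ‖t‖ ≤ δ * (‖t‖ + 1) := by
          refine mul_le_mul hbound (by linarith [norm_nonneg t]) (norm_nonneg t)
            (le_of_lt hδ)
      _ = ε := by rw [hδdef]; field_simp
  | zero =>
    exact ⟨∅, isCompact_empty, fun e _ _ => by simp [le_of_lt hε]⟩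
  | add x y _ _ ihx ihy =>
    obtain ⟨K₁, hK₁, h₁⟩ := ihx (half_pos hε)
    obtain ⟨K₂, hK₂, h₂⟩ := ihy (half_pos hε)
    refine ⟨K₁ ∪ K₂, hK₁.union hK₂, fun e he he1 => ?_⟩
    have key : M.smul (ofRealC0 𝕜 e) (x + y) - (x + y)
        = (M.smul (ofRealC0 𝕜 e) x - x) + (M.smul (ofRealC0 𝕜 e) y - y) := by
      rw [map_add]; abel
    rw [key]
    have b1 := h₁ e he (fun z hz => he1 z (Set.mem_union_left _ hz))
    have b2 := h₂ e he (fun z hz => he1 z (Set.mem_union_right _ hz))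
    calc ‖(M.smul (ofRealC0 𝕜 e) x - x) + (M.smul (ofRealC0 𝕜 e) y - y)‖
        ≤ ‖M.smul (ofRealC0 𝕜 e) x - x‖ + ‖M.smul (ofRealC0 𝕜 e) y - y‖ := norm_add_le _ _
      _ ≤ ε / 2 + ε / 2 := add_le_add b1 b2
      _ = ε := add_halves ε
  | smul c x _ ihx =>
    have hδ : 0 < ε / (‖c‖ + 1) := div_pos hε (by positivity)
    obtain ⟨K, hK, h⟩ := ihx hδ
    refine ⟨K, hK, fun e he he1 => ?_⟩
    have key : M.smul (ofRealC0 𝕜 e) (c • x) - c • x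
        = c • (M.smul (ofRealC0 𝕜 e) x - x) := by
      rw [map_smul, smul_sub]
    rw [key, norm_smul]
    calc ‖c‖ * ‖M.smul (ofRealC0 𝕜 e) x - x‖ ≤ (‖c‖ + 1) * (ε / (‖c‖ + 1)) := by
          refine mul_le_mul (by linarith [norm_nonneg c]) (h e he he1) (norm_nonneg _)
            (by positivity)
      _ = ε := by field_simp


variable [LocallyCompactSpace Ω] [T2Space Ω]
variable (M : C0Module 𝕜 Ω Γ)

lemma approx_id (hM : C0Module.Nondegenerate M) (s : Γ) {ε : ℝ} (hε : 0 < ε) :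
    ∃ e : C₀(Ω, ℝ), (∀ x, 0 ≤ e x) ∧ ‖e‖ ≤ 1 ∧ ‖M.smul (ofRealC0 𝕜 e) s - s‖ ≤ ε := by
  -- find u in the span close to s
  have hs : s ∈ closure (Submodule.span 𝕜
      {x : Γ | ∃ (f : C₀(Ω, 𝕜)) (t : Γ), M.smul f t = x} : Set Γ) := hM s
  obtain ⟨u, hu, hdist⟩ := Metric.mem_closure_iff.mp hs (ε / 4) (by positivity)
  rw [dist_comm, dist_eq_norm] at hdist
  obtain ⟨K, hK, hKe⟩ := approx_id_span M u hu (show (0:ℝ) < ε / 4 by positivity)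
  obtain ⟨g, hg1, _, hgc, hg01⟩ :=
    exists_continuous_one_zero_of_isCompact hK isClosed_empty (Set.disjoint_empty K)
  set e : C₀(Ω, ℝ) :=
    { toFun := g
      continuous_toFun := g.continuous
      zero_at_infty' := hgc.is_zero_at_infty } with he_def
  have he01 : ∀ x, 0 ≤ e x ∧ e x ≤ 1 := fun x => ⟨(hg01 x).1, (hg01 x).2⟩
  have heK : ∀ x ∈ K, e x = 1 := fun x hx => hg1 hx
  have hnorm : ‖e‖ ≤ 1 := c0_norm_le _ zero_le_one fun x => by
    rw [Real.norm_eq_abs, abs_of_nonneg (he01 x).1]; exact (he01 x).2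
  refine ⟨e, fun x => (he01 x).1, hnorm, ?_⟩
  have hsplit : M.smul (ofRealC0 𝕜 e) s - s
      = M.smul (ofRealC0 𝕜 e) (s - u) + (M.smul (ofRealC0 𝕜 e) u - u) + (u - s) := by
    rw [map_sub]; abel
  rw [hsplit]
  have b1 : ‖M.smul (ofRealC0 𝕜 e) (s - u)‖ ≤ ε / 4 := by
    refine (M.norm_smul_le _ _).trans ?_
    calc ‖ofRealC0 𝕜 e‖ * ‖s - u‖ ≤ 1 * (ε / 4) := by
          refine mul_le_mul ((ofRealC0_norm_le e).trans hnorm) ?_ (norm_nonneg _) zero_le_one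
          rw [show s - u = -(u - s) by abel, norm_neg]
          exact le_of_lt hdist
      _ = ε / 4 := one_mul _
  have b2 := hKe e he01 heK
  have b3 : ‖u - s‖ ≤ ε / 4 := le_of_lt hdist
  calc ‖M.smul (ofRealC0 𝕜 e) (s - u) + (M.smul (ofRealC0 𝕜 e) u - u) + (u - s)‖
      ≤ ‖M.smul (ofRealC0 𝕜 e) (s - u) + (M.smul (ofRealC0 𝕜 e) u - u)‖ + ‖u - s‖ :=
        norm_add_le _ _
    _ ≤ (‖M.smul (ofRealC0 𝕜 e) (s - u)‖ + ‖M.smul (ofRealC0 𝕜 e) u - u‖) + ‖u - s‖ :=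
        add_le_add_left (norm_add_le _ _) _
    _ ≤ (ε / 4 + ε / 4) + ε / 4 := by exact add_le_add (add_le_add b1 b2) b3
    _ ≤ ε := by linarith

lemma frL_norm_eq (hM : C0Module.Nondegenerate M) (hAL : C0Module.IsAL M) (s : Γ) :
    ‖frL M hAL s‖ = ‖s‖ := by
  refine le_antisymm (frL_norm_le M hAL s) ?_
  refine le_of_forall_pos_le_add fun ε hε => ?_
  obtain ⟨e, he0, hen, happrox⟩ := approx_id M hM s (half_pos hε)
  have h1 : nu M s e ≤ ‖frL M hAL s‖ := by
    have := (frL M hAL s).le_opNorm (ofRealC0 𝕜 e)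
    rw [frL_ofReal M hAL s he0] at this
    have h2 : ‖nu M s e‖ ≤ ‖frL M hAL s‖ * ‖ofRealC0 𝕜 e‖ := this
    rw [Real.norm_eq_abs, abs_of_nonneg (nu_nonneg M s e)] at h2
    calc nu M s e ≤ ‖frL M hAL s‖ * ‖ofRealC0 𝕜 e‖ := h2
      _ ≤ ‖frL M hAL s‖ * 1 :=
          mul_le_mul_of_nonneg_left ((ofRealC0_norm_le e).trans hen)
            (norm_nonneg (frL M hAL s))
      _ = ‖frL M hAL s‖ := mul_one _
  have h2 : ‖s‖ ≤ nu M s e + ε / 2 := by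
    have : ‖s‖ - ‖M.smul (ofRealC0 𝕜 e) s‖ ≤ ‖M.smul (ofRealC0 𝕜 e) s - s‖ := by
      have := norm_sub_norm_le (M.smul (ofRealC0 𝕜 e) s - s) (M.smul (ofRealC0 𝕜 e) s)
      calc ‖s‖ - ‖M.smul (ofRealC0 𝕜 e) s‖
          ≤ ‖s - M.smul (ofRealC0 𝕜 e) s‖ := norm_sub_norm_le s _
        _ = ‖M.smul (ofRealC0 𝕜 e) s - s‖ := by
            rw [← norm_neg (s - M.smul (ofRealC0 𝕜 e) s)]; congr 1; abel
      
    unfold nu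
    linarith [happrox]
  linarith

variable (M : C0Module 𝕜 Ω Γ)

/-- real-valued modulus of f -/
def absR (f : C₀(Ω, 𝕜)) : C₀(Ω, ℝ) where
  toFun := fun x => ‖f x‖
  continuous_toFun := f.continuous.norm
  zero_at_infty' := by simpa using f.zero_at_infty'.norm

@[simp] lemma absR_apply (f : C₀(Ω, 𝕜)) (x : Ω) : absR f x = ‖f x‖ := rfl

lemma nu_module (f : C₀(Ω, 𝕜)) (s : Γ) {h : C₀(Ω, ℝ)} (hh : ∀ x, 0 ≤ h x) :
    nu M (M.smul f s) h = nu M s (absR f * h) := by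
  unfold nu
  rw [← M.mul_smul]
  have h1 : absC0 (ofRealC0 𝕜 h * f) = ofRealC0 𝕜 (absR f * h) := by
    ext x
    simp only [absC0_apply, ZeroAtInftyContinuousMap.coe_mul, Pi.mul_apply, ofRealC0_apply,
      absR_apply, norm_mul, RCLike.norm_ofReal, abs_of_nonneg (hh x)]
    push_cast
    ring
  rw [← norm_smul_abs M (ofRealC0 𝕜 h * f) s, h1]

lemma psi_module (f : C₀(Ω, 𝕜)) (s : Γ) (h : C₀(Ω, ℝ)) :
    psi M (M.smul f s) h = psi M s (absR f * h) := by
  have hpos : posP (absR f * h) = absR f * posP h := by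
    ext x
    simp only [posP_apply, ZeroAtInftyContinuousMap.coe_mul, Pi.mul_apply, absR_apply]
    rw [mul_max_of_nonneg _ _ (norm_nonneg (f x)), mul_zero]
  have hneg : negP (absR f * h) = absR f * negP h := by
    ext x
    simp only [negP_apply, ZeroAtInftyContinuousMap.coe_mul, Pi.mul_apply, absR_apply]
    rw [mul_max_of_nonneg _ _ (norm_nonneg (f x)), mul_zero, neg_mul_eq_mul_neg]
  unfold psi
  rw [hpos, hneg, nu_module M f s (posP_nonneg h), nu_module M f s (negP_nonneg h)]

lemma frL_module (hAL : C0Module.IsAL M) (f g : C₀(Ω, 𝕜)) (s : Γ) :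
    frL M hAL (M.smul f s) g = frL M hAL s (absC0 f * g) := by
  rw [frL_apply, frL_apply, psi_module M f s (reC0 g)]
  congr 1
  ext x
  simp only [ZeroAtInftyContinuousMap.coe_mul, Pi.mul_apply, reC0_apply, absR_apply,
    absC0_apply]
  rw [RCLike.re_ofReal_mul]

lemma frL_add_pt (hAL : C0Module.IsAL M) (s₁ s₂ : Γ) {f : C₀(Ω, ℝ)} (hf : ∀ x, 0 ≤ f x) :
    frL M hAL (s₁ + s₂) (ofRealC0 𝕜 f) ≤
      frL M hAL s₁ (ofRealC0 𝕜 f) + frL M hAL s₂ (ofRealC0 𝕜 f) := by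
  rw [frL_ofReal M hAL _ hf, frL_ofReal M hAL _ hf, frL_ofReal M hAL _ hf]
  unfold nu
  rw [map_add]
  exact norm_add_le _ _


variable [LocallyCompactSpace Ω] [T2Space Ω]
variable (M : C0Module 𝕜 Ω Γ)

end ALaux

open ALaux RCLike in
/-- An AL-module over `C₀(Ω)` carries a canonical `C₀(Ω)'`-valued norm
`s ↦ |s|` with `|s|(f) = ‖f • s‖` for `f ≥ 0`, satisfying the norm, modulus and
subadditivity properties. -/
theorem al_module_dual_valued_norm
    [LocallyCompactSpace Ω] [T2Space Ω] [CompleteSpace Γ]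
    (M : C0Module 𝕜 Ω Γ) (hM : M.Nondegenerate) (hAL : M.IsAL) :
    ∃ A : Γ → (C₀(Ω, 𝕜) →L[𝕜] 𝕜),
      (∀ (s : Γ) (f : C₀(Ω, ℝ)), (∀ x, 0 ≤ f x) →
        A s (ofRealC0 𝕜 f) = (‖M.smul (ofRealC0 𝕜 f) s‖ : 𝕜)) ∧
      (∀ s : Γ, ‖A s‖ = ‖s‖) ∧
      (∀ (f g : C₀(Ω, 𝕜)) (s : Γ), A (M.smul f s) g = A s (absC0 f * g)) ∧
      (∀ (s₁ s₂ : Γ) (f : C₀(Ω, ℝ)), (∀ x, 0 ≤ f x) →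
        RCLike.re (A (s₁ + s₂) (ofRealC0 𝕜 f)) ≤
          RCLike.re (A s₁ (ofRealC0 𝕜 f)) + RCLike.re (A s₂ (ofRealC0 𝕜 f))) := by
  refine ⟨fun s => StrongDual.extendRCLike (frL M hAL s), ?_, ?_, ?_, ?_⟩
  · intro s f hf
    beta_reduce
    rw [ContinuousLinearMap.extendTo𝕜'_apply]
    have h1 : frL M hAL s (ofRealC0 𝕜 f) = nu M s f := frL_ofReal M hAL s hf
    have h2 : frL M hAL s ((I : 𝕜) • ofRealC0 𝕜 f) = 0 := by
      rw [frL_apply]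
      have : reC0 ((I : 𝕜) • ofRealC0 𝕜 f) = 0 := by
        ext x
        simp only [reC0_apply, ZeroAtInftyContinuousMap.coe_smul, Pi.smul_apply,
          ofRealC0_apply, smul_eq_mul, ZeroAtInftyContinuousMap.coe_zero, Pi.zero_apply]
        rw [mul_comm, RCLike.re_ofReal_mul, RCLike.I_re, mul_zero]
      rw [this]
      have hp : posP (0 : C₀(Ω, ℝ)) = 0 := by ext x; simp
      have hn : negP (0 : C₀(Ω, ℝ)) = 0 := by ext x; simp
      rw [frL_apply] at *
      unfold psi
      rw [hp, hn, nu_zero, sub_zero]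
    rw [h1, h2]
    unfold nu
    push_cast
    ring
  · intro s
    beta_reduce
    exact (ContinuousLinearMap.norm_extendTo𝕜' (𝕜 := 𝕜) _).trans (frL_norm_eq M hM hAL s)
  · intro f g s
    beta_reduce
    rw [ContinuousLinearMap.extendTo𝕜'_apply, ContinuousLinearMap.extendTo𝕜'_apply,
      frL_module M hAL f g s, frL_module M hAL f ((I : 𝕜) • g) s]
    have : absC0 f * ((I : 𝕜) • g) = (I : 𝕜) • (absC0 f * g) := by
      ext x
      simp only [ZeroAtInftyContinuousMap.coe_mul, Pi.mul_apply,
        ZeroAtInftyContinuousMap.coe_smul, Pi.smul_apply, smul_eq_mul]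
      ring
    rw [this]
  · intro s₁ s₂ f hf
    beta_reduce
    rw [ContinuousLinearMap.extendTo𝕜'_apply, ContinuousLinearMap.extendTo𝕜'_apply,
      ContinuousLinearMap.extendTo𝕜'_apply]
    simp only [map_sub, RCLike.ofReal_re]
    have him : ∀ s : Γ, RCLike.re ((I : 𝕜) * ((frL M hAL s ((I : 𝕜) • ofRealC0 𝕜 f) : ℝ) : 𝕜))
        = 0 := by
      intro s
      rw [mul_comm, RCLike.re_ofReal_mul, RCLike.I_re, mul_zero]
    rw [him, him, him]
    simp only [sub_zero]
    exact frL_add_pt M hAL s₁ s₂ hf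



end
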